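/- Assume V(x) = ½‖∇ψ(x)‖² is convex, and let v₁, v₂ be two strongly evanescent solutions of the second-order gradient system (DS-2). Then the function q(t) = ½‖v₁(t) − v₂(t)‖² is convex and nonincreasing on [0, ∞); in particular, if v₁(0) = v₂(0) then v₁ = v₂. -/

import Mathlib

open Filter MeasureTheory Set RealInnerProductSpace

/-!
Write `w = v₁ - v₂` and `q = ½‖w‖²`. Then `q' = ⟪w, w'⟫` and
`q'' = ‖w'‖² + ⟪w, ∇V(v₁) - ∇V(v₂)⟫ ≥ 0`, since the gradient of a convex function is monotone;
so `q` is convex. If `q'(t₀) = c > 0`, then `q' ≥ c` from `t₀` on and `q` grows linearly, while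
Cauchy–Schwarz gives `‖w'‖² ≥ q'² / 2q ≥ (c / 2) (log q)'`. Integrating, `log q` stays bounded by
the finite energy `∫ ‖w'‖²`, which is absurd. Hence `q' ≤ 0`.
-/

section ConvexGradient

variable {H : Type*} [NormedAddCommGroup H] [InnerProductSpace ℝ H] [CompleteSpace H]
  {V : H → ℝ} {s : Set H} {x y : H}

theorem ConvexOn.inner_gradient_le_sub (hV : ConvexOn ℝ s V) (hx : x ∈ s) (hy : y ∈ s)
    (hVx : DifferentiableAt ℝ V x) : ⟪gradient V x, y - x⟫ ≤ V y - V x := by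
  let φ : ℝ → ℝ := V ∘ AffineMap.lineMap x y
  have hφ : ConvexOn ℝ (AffineMap.lineMap x y ⁻¹' s) φ := hV.comp_affineMap _
  have hφ' : HasDerivAt φ ⟪gradient V x, y - x⟫ 0 := by
    rw [inner_gradient_left]
    exact hVx.hasFDerivAt.comp_hasDerivAt_of_eq 0 AffineMap.hasDerivAt_lineMap
      (AffineMap.lineMap_apply_zero x y).symm
  have := hφ.le_slope_of_hasDerivAt (x := 0) (y := 1) (by simpa using hx) (by simpa using hy)
    zero_lt_one hφ'
  simpa [φ, slope_def_field] using this

theorem ConvexOn.inner_sub_gradient_sub_nonneg (hV : ConvexOn ℝ s V) (hx : x ∈ s) (hy : y ∈ s)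
    (hVx : DifferentiableAt ℝ V x) (hVy : DifferentiableAt ℝ V y) :
    0 ≤ ⟪x - y, gradient V x - gradient V y⟫ := by
  have hxy := hV.inner_gradient_le_sub hx hy hVx
  have hyx := hV.inner_gradient_le_sub hy hx hVy
  rw [← neg_sub x y, inner_neg_right] at hxy
  rw [inner_sub_right, real_inner_comm, real_inner_comm (gradient V y)]
  linarith

end ConvexGradient

theorem ContDiff.contDiff_gradient {H : Type*} [NormedAddCommGroup H] [InnerProductSpace ℝ H]
    [CompleteSpace H] {ψ : H → ℝ} {m n : WithTop ℕ∞} (hψ : ContDiff ℝ n ψ) (hmn : m + 1 ≤ n) :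
    ContDiff ℝ m (gradient ψ) :=
  (InnerProductSpace.toDual ℝ H).symm.contDiff.comp (hψ.fderiv_right hmn)

theorem memLp_two_of_integrable_norm_sq_add {α E : Type*} [MeasurableSpace α] {μ : Measure α}
    [NormedAddCommGroup E] {f : α → E} {r : α → ℝ} (hf : AEStronglyMeasurable f μ)
    (hr : 0 ≤ r) (h : Integrable (fun x => ‖f x‖ ^ 2 + r x) μ) : MemLp f 2 μ :=
  (memLp_two_iff_integrable_sq_norm hf).2 <|
    h.mono' (hf.norm.pow 2) (ae_of_all _ fun x => by
      rw [Real.norm_of_nonneg (by positivity)]; linarith [show 0 ≤ r x from hr x])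

section GrowthOnIci

variable {q p g : ℝ → ℝ} {t₀ c : ℝ}

theorem add_mul_sub_le_of_le_deriv (hq_cont : ContinuousOn q (Ici t₀))
    (hq : ∀ t ∈ Ioi t₀, HasDerivAt q (p t) t) (hpc : ∀ t ∈ Ici t₀, c ≤ p t) :
    ∀ T ∈ Ici t₀, q t₀ + c * (T - t₀) ≤ q T := by
  intro T hT
  have := intervalIntegral.integral_le_sub_of_hasDeriv_right_of_le hT
    (hq_cont.mono Icc_subset_Ici_self) (fun t ht => (hq t ht.1).hasDerivWithinAt)
    (integrableOn_const (C := c) measure_Icc_lt_top.ne) (fun t ht => hpc t ht.1.le)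
  simp only [intervalIntegral.integral_const, smul_eq_mul] at this
  linarith

theorem half_mul_log_sub_log_le_setIntegral (hq_cont : ContinuousOn q (Ici t₀))
    (hq : ∀ t ∈ Ioi t₀, HasDerivAt q (p t) t) (hpc : ∀ t ∈ Ici t₀, c ≤ p t) (hc : 0 < c)
    (hq₀ : 0 < q t₀) (hpq : ∀ t ∈ Ici t₀, p t ^ 2 ≤ 2 * q t * g t)
    (hg : IntegrableOn g (Ioi t₀)) :
    ∀ T ∈ Ici t₀, c / 2 * Real.log (q T) - c / 2 * Real.log (q t₀) ≤ ∫ t in Ioi t₀, g t := by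
  intro T hT
  have hq_pos : ∀ t ∈ Ici t₀, 0 < q t := fun t ht => by
    nlinarith [add_mul_sub_le_of_le_deriv hq_cont hq hpc t ht, mem_Ici.1 ht]
  have hg₀ : ∀ t ∈ Ioi t₀, 0 ≤ g t := fun t ht => by
    have ht' : t ∈ Ici t₀ := Ioi_subset_Ici_self ht
    nlinarith [hq_pos t ht', hpq t ht', hpc t ht']
  calc c / 2 * Real.log (q T) - c / 2 * Real.log (q t₀) ≤ ∫ t in t₀..T, g t := by
        refine intervalIntegral.sub_le_integral_of_hasDeriv_right_of_le hT
          (continuousOn_const.mul ((hq_cont.mono Icc_subset_Ici_self).log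
            fun t ht => (hq_pos t ht.1).ne'))
          (fun t ht => (((hq t ht.1).log (hq_pos t ht.1.le).ne').const_mul
            (c / 2)).hasDerivWithinAt)
          ((integrableOn_Icc_iff_integrableOn_Ioc).2 (hg.mono_set Ioc_subset_Ioi_self))
          fun t ht => ?_
        have hqt := hq_pos t ht.1.le
        rw [← mul_div_assoc, div_le_iff₀ hqt]
        nlinarith [hpq t ht.1.le, hpc t ht.1.le]
    _ ≤ ∫ t in Ioi t₀, g t := by
        rw [intervalIntegral.integral_of_le hT]
        exact setIntegral_mono_set hg (ae_restrict_of_forall_mem measurableSet_Ioi hg₀)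
          Ioc_subset_Ioi_self.eventuallyLE

theorem not_integrableOn_of_sq_deriv_le_mul (hq_cont : ContinuousOn q (Ici t₀))
    (hq : ∀ t ∈ Ioi t₀, HasDerivAt q (p t) t) (hpc : ∀ t ∈ Ici t₀, c ≤ p t) (hc : 0 < c)
    (hq₀ : 0 < q t₀) (hpq : ∀ t ∈ Ici t₀, p t ^ 2 ≤ 2 * q t * g t) :
    ¬ IntegrableOn g (Ioi t₀) := by
  intro hg
  set M := ∫ t in Ioi t₀, g t
  set L := Real.log (q t₀) + 2 * M / c
  set T := t₀ + Real.exp L / c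
  have hT : T ∈ Ici t₀ := by
    simp only [mem_Ici, T, le_add_iff_nonneg_right]; positivity
  have hqT : Real.exp L < q T := by
    have := add_mul_sub_le_of_le_deriv hq_cont hq hpc T hT
    have : c * (T - t₀) = Real.exp L := by simp only [T]; field_simp; ring
    linarith
  have hlogT : L < Real.log (q T) := (Real.lt_log_iff_exp_lt ((Real.exp_pos L).trans hqT)).2 hqT
  have := half_mul_log_sub_log_le_setIntegral hq_cont hq hpc hc hq₀ hpq hg T hT
  have : c / 2 * L = c / 2 * Real.log (q t₀) + M := by simp only [L]; field_simp
  nlinarith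

end GrowthOnIci

theorem nonpos_of_sq_le_mul_integrableOn {q p g : ℝ → ℝ} {a : ℝ}
    (hq : ∀ t ∈ Ici a, HasDerivWithinAt q (p t) (Ici a) t) (hp : MonotoneOn p (Ici a))
    (hq₀ : ∀ t ∈ Ici a, 0 ≤ q t) (hpq : ∀ t ∈ Ici a, p t ^ 2 ≤ 2 * q t * g t)
    (hg : IntegrableOn g (Ioi a)) :
    ∀ t ∈ Ici a, p t ≤ 0 := by
  intro t₀ ht₀
  by_contra! hc
  have hIci : Ici t₀ ⊆ Ici a := Ici_subset_Ici.2 ht₀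
  have hqt₀ : 0 < q t₀ := by
    refine (hq₀ t₀ ht₀).lt_of_ne fun h => ?_
    have := hpq t₀ ht₀
    rw [← h] at this
    nlinarith
  refine not_integrableOn_of_sq_deriv_le_mul
    (fun t ht => ((hq t (hIci ht)).mono hIci).continuousWithinAt)
    (fun t ht => (hq t (hIci (Ioi_subset_Ici_self ht))).hasDerivAt
      (Ici_mem_nhds (ht₀.trans_lt ht)))
    (fun t ht => hp ht₀ (hIci ht) ht) hc hqt₀ (fun t ht => hpq t (hIci ht))
    (hg.mono_set (Ioi_subset_Ioi ht₀))

section SecondOrder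

variable {H : Type*} [NormedAddCommGroup H] [InnerProductSpace ℝ H]

theorem HasDerivWithinAt.half_norm_sq {w : ℝ → H} {v : H} {s : Set ℝ} {t : ℝ}
    (hw : HasDerivWithinAt w v s t) :
    HasDerivWithinAt (fun t => (1 / 2 : ℝ) * ‖w t‖ ^ 2) ⟪w t, v⟫ s t :=
  (hw.norm_sq.const_mul _).congr_deriv (by ring)

theorem HasDerivWithinAt.inner_deriv {w w' : ℝ → H} {v : H} {s : Set ℝ} {t : ℝ}
    (hw : HasDerivWithinAt w (w' t) s t) (hw' : HasDerivWithinAt w' v s t) :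
    HasDerivWithinAt (fun t => ⟪w t, w' t⟫) (‖w' t‖ ^ 2 + ⟪w t, v⟫) s t :=
  (hw.inner ℝ hw').congr_deriv (by rw [real_inner_self_eq_norm_sq, add_comm])

variable {w w' u : ℝ → H} {a : ℝ}

theorem monotoneOn_inner_deriv_of_inner_nonneg
    (hw : ∀ t ∈ Ici a, HasDerivWithinAt w (w' t) (Ici a) t)
    (hw' : ∀ t ∈ Ici a, HasDerivWithinAt w' (u t) (Ici a) t)
    (hu : ∀ t ∈ Ici a, 0 ≤ ⟪w t, u t⟫) :
    MonotoneOn (fun t => ⟪w t, w' t⟫) (Ici a) :=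
  monotoneOn_of_hasDerivWithinAt_nonneg (convex_Ici a)
    (fun t ht => ((hw t ht).inner_deriv (hw' t ht)).continuousWithinAt)
    (fun t ht => ((hw t (interior_subset ht)).inner_deriv (hw' t (interior_subset ht))).mono
      interior_subset)
    (fun t ht => add_nonneg (sq_nonneg _) (hu t (interior_subset ht)))

theorem convexOn_half_norm_sq_of_inner_nonneg
    (hw : ∀ t ∈ Ici a, HasDerivWithinAt w (w' t) (Ici a) t)
    (hw' : ∀ t ∈ Ici a, HasDerivWithinAt w' (u t) (Ici a) t)
    (hu : ∀ t ∈ Ici a, 0 ≤ ⟪w t, u t⟫) :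
    ConvexOn ℝ (Ici a) (fun t => (1 / 2 : ℝ) * ‖w t‖ ^ 2) :=
  convexOn_of_hasDerivWithinAt2_nonneg (convex_Ici a)
    (fun t ht => (hw t ht).half_norm_sq.continuousWithinAt)
    (fun t ht => (hw t (interior_subset ht)).half_norm_sq.mono interior_subset)
    (fun t ht => ((hw t (interior_subset ht)).inner_deriv (hw' t (interior_subset ht))).mono
      interior_subset)
    (fun t ht => add_nonneg (sq_nonneg _) (hu t (interior_subset ht)))

theorem antitoneOn_half_norm_sq_of_integrableOn
    (hw : ∀ t ∈ Ici a, HasDerivWithinAt w (w' t) (Ici a) t)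
    (hw' : ∀ t ∈ Ici a, HasDerivWithinAt w' (u t) (Ici a) t)
    (hu : ∀ t ∈ Ici a, 0 ≤ ⟪w t, u t⟫) (hint : IntegrableOn (fun t => ‖w' t‖ ^ 2) (Ioi a)) :
    AntitoneOn (fun t => (1 / 2 : ℝ) * ‖w t‖ ^ 2) (Ici a) := by
  have hderiv_nonpos : ∀ t ∈ Ici a, ⟪w t, w' t⟫ ≤ 0 :=
    nonpos_of_sq_le_mul_integrableOn (fun t ht => (hw t ht).half_norm_sq)
      (monotoneOn_inner_deriv_of_inner_nonneg hw hw' hu) (fun t _ => by positivity)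
      (fun t _ => by
        have := abs_real_inner_le_norm (w t) (w' t)
        rw [← sq_abs]
        nlinarith [abs_nonneg ⟪w t, w' t⟫])
      hint
  exact antitoneOn_of_hasDerivWithinAt_nonpos (convex_Ici a)
    (fun t ht => (hw t ht).half_norm_sq.continuousWithinAt)
    (fun t ht => (hw t (interior_subset ht)).half_norm_sq.mono interior_subset)
    (fun t ht => hderiv_nonpos t (interior_subset ht))

end SecondOrder

/-- Proposition 6 (contraction of solutions of (DS-2)): if `V = ½‖∇ψ‖²` is convex and
`v₁, v₂` are strongly evanescent solutions of `v'' = ∇V(v)`, then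
`q(t) = ½‖v₁(t) - v₂(t)‖²` is convex and nonincreasing on `[0, ∞)`; in particular, if
`v₁(0) = v₂(0)`, then `v₁ = v₂` on `[0, ∞)`. -/
theorem stmt_16 {H : Type*} [NormedAddCommGroup H] [InnerProductSpace ℝ H] [CompleteSpace H]
    (ψ : H → ℝ) (hψ : ContDiff ℝ 2 ψ)
    (V : H → ℝ) (hV : V = fun x => (1/2 : ℝ) * ‖gradient ψ x‖ ^ 2)
    (hVconv : ConvexOn ℝ univ V)
    (v₁ v₁' v₂ v₂' : ℝ → H)
    (hv₁ : ∀ t ∈ Ici (0:ℝ), HasDerivWithinAt v₁ (v₁' t) (Ici 0) t)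
    (hv₁' : ∀ t ∈ Ici (0:ℝ), HasDerivWithinAt v₁' (gradient V (v₁ t)) (Ici 0) t)
    (hv₂ : ∀ t ∈ Ici (0:ℝ), HasDerivWithinAt v₂ (v₂' t) (Ici 0) t)
    (hv₂' : ∀ t ∈ Ici (0:ℝ), HasDerivWithinAt v₂' (gradient V (v₂ t)) (Ici 0) t)
    (hev₁ : IntegrableOn (fun t => ‖v₁' t‖ ^ 2 + V (v₁ t)) (Ioi 0))
    (hev₂ : IntegrableOn (fun t => ‖v₂' t‖ ^ 2 + V (v₂ t)) (Ioi 0)) :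
    ConvexOn ℝ (Ici 0) (fun t => (1/2 : ℝ) * ‖v₁ t - v₂ t‖ ^ 2) ∧
      AntitoneOn (fun t => (1/2 : ℝ) * ‖v₁ t - v₂ t‖ ^ 2) (Ici 0) ∧
      (v₁ 0 = v₂ 0 → ∀ t ≥ (0:ℝ), v₁ t = v₂ t) := by
  have hV_diff : Differentiable ℝ V := by
    rw [hV]
    exact (contDiff_const.mul ((hψ.contDiff_gradient (m := 1) le_rfl).norm_sq ℝ)).differentiable
      one_ne_zero
  have hw : ∀ t ∈ Ici (0:ℝ), HasDerivWithinAt (fun t => v₁ t - v₂ t) (v₁' t - v₂' t) (Ici 0) t :=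
    fun t ht => (hv₁ t ht).sub (hv₂ t ht)
  have hw' : ∀ t ∈ Ici (0:ℝ), HasDerivWithinAt (fun t => v₁' t - v₂' t)
      (gradient V (v₁ t) - gradient V (v₂ t)) (Ici 0) t :=
    fun t ht => (hv₁' t ht).sub (hv₂' t ht)
  have hu : ∀ t ∈ Ici (0:ℝ), 0 ≤ ⟪v₁ t - v₂ t, gradient V (v₁ t) - gradient V (v₂ t)⟫ :=
    fun t _ => hVconv.inner_sub_gradient_sub_nonneg trivial trivial (hV_diff _) (hV_diff _)
  have hL2 : ∀ {v v' : ℝ → H},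
      (∀ t ∈ Ici (0:ℝ), HasDerivWithinAt v' (gradient V (v t)) (Ici 0) t) →
      IntegrableOn (fun t => ‖v' t‖ ^ 2 + V (v t)) (Ioi 0) →
      MemLp v' 2 (volume.restrict (Ioi 0)) := fun hv' hev =>
    memLp_two_of_integrable_norm_sq_add
      (ContinuousOn.aestronglyMeasurable (fun t ht =>
        (hv' t (Ioi_subset_Ici_self ht)).continuousWithinAt.mono Ioi_subset_Ici_self)
        measurableSet_Ioi)
      (fun t => by simp only [hV, Pi.zero_apply]; positivity) hev
  have hint : IntegrableOn (fun t => ‖v₁' t - v₂' t‖ ^ 2) (Ioi 0) :=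
    ((hL2 hv₁' hev₁).sub (hL2 hv₂' hev₂)).integrable_norm_pow two_ne_zero
  have hanti := antitoneOn_half_norm_sq_of_integrableOn hw hw' hu hint
  refine ⟨convexOn_half_norm_sq_of_inner_nonneg hw hw' hu, hanti, fun h0 t ht => ?_⟩
  have hq_le := hanti self_mem_Ici ht ht
  simp only [h0, sub_self, norm_zero] at hq_le
  exact sub_eq_zero.1 (norm_eq_zero.1 (by nlinarith [norm_nonneg (v₁ t - v₂ t)]))
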